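/- Let B ⊆ 𝒜_m be a proper ideal of corank i (so 0 ≤ i ≤ m). Then: (a) Δ^i B = Δ_{m−i+1} B is a proper ideal of 𝒜_m (indeed it is contained in the maximal ideal); and (b) if i < m, then Δ_{m−i} B = 𝒜_m. Consequently Δ^i B, with i = corank B, is the critical Jacobian extension of B: the Jacobian extension by the minors of least order for which the extension is still a proper ideal. -/

import Mathlib

open MvPowerSeries

/-- `𝒜 m` : formal power series in `m` variables over `ℂ`, the algebraic model for the
local ring of germs of differentiable functions at the origin of `ℂ^m`. -/
abbrev Amod (m : ℕ) : Type := MvPowerSeries (Fin m) ℂ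

/-- Formal partial derivative `∂/∂x_j` of a multivariate power series. -/
noncomputable def pd {m : ℕ} (j : Fin m) (φ : Amod m) : Amod m :=
  fun e => ((e j + 1 : ℕ) : ℂ) * MvPowerSeries.coeff (e + Finsupp.single j 1) φ

/-- The differential at the origin: the vector of degree-one coefficients. -/
noncomputable def diffAtZero {m : ℕ} (φ : Amod m) : Fin m → ℂ :=
  fun j => MvPowerSeries.coeff (Finsupp.single j 1) φ

/-- The rank of an ideal `B ⊆ 𝒜 m`: the dimension of the `ℂ`-linear span of the
differentials at `0` of the elements of `B`. -/
noncomputable def rankIdeal {m : ℕ} (B : Ideal (Amod m)) : ℕ :=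
  Module.finrank ℂ (Submodule.span ℂ (diffAtZero '' (B : Set (Amod m))))

/-- The corank of an ideal `B ⊆ 𝒜 m`. -/
noncomputable def corankIdeal {m : ℕ} (B : Ideal (Amod m)) : ℕ := m - rankIdeal B

/-- The Jacobian extension `Δ_k B` (lower index): the ideal generated by `B` together with
all `k × k` minors of Jacobian matrices of `k`-tuples of elements of `B`; for `k > m` it
is `B` itself. -/
noncomputable def jacExt {m : ℕ} (k : ℕ) (B : Ideal (Amod m)) : Ideal (Amod m) :=
  if m < k then B
  else B ⊔ Ideal.span { f | ∃ φ : Fin k → Amod m, (∀ i, φ i ∈ B) ∧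
    ∃ j : Fin k → Fin m, StrictMono j ∧
      f = Matrix.det (Matrix.of fun i l => pd (j l) (φ i)) }

/-- Jacobian extension with upper index: `Δ^i B = Δ_{m-i+1} B`. -/
noncomputable def jacExtUpper {m : ℕ} (i : ℕ) (B : Ideal (Amod m)) : Ideal (Amod m) :=
  jacExt (m - i + 1) B

/-- The iterated critical extensions `TBiter J p = Δ^{i_p} ⋯ Δ^{i_1} J`. -/
noncomputable def TBiter {m : ℕ} (J : Ideal (Amod m)) : ℕ → Ideal (Amod m)
  | 0 => J
  | p + 1 => jacExtUpper (corankIdeal (TBiter J p)) (TBiter J p)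

/-- The Thom–Boardman symbol, `0`-indexed: `TB J p` is the `(p+1)`-st entry `i_{p+1}`,
i.e. `TB J 0 = corank J` and `TB J p = corank (Δ^{i_p} ⋯ Δ^{i_1} J)`. -/
noncomputable def TB {m : ℕ} (J : Ideal (Amod m)) (p : ℕ) : ℕ :=
  corankIdeal (TBiter J p)

/-- Coefficient `a_i` of the generic monic polynomial of degree `n`
(the first block of `n` variables of `𝒜 (n+r)`), with `a_n = 1` and `a_i = 0` for `i > n`. -/
noncomputable def aCoef (n r i : ℕ) : Amod (n + r) :=
  if h : i < n then MvPowerSeries.X (Fin.castAdd r ⟨i, h⟩)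
  else if i = n then 1 else 0

/-- Coefficient `b_j` of the generic monic polynomial of degree `r`
(the last block of `r` variables of `𝒜 (n+r)`), with `b_r = 1` and `b_j = 0` for `j > r`. -/
noncomputable def bCoef (n r j : ℕ) : Amod (n + r) :=
  if h : j < r then MvPowerSeries.X (Fin.natAdd n ⟨j, h⟩)
  else if j = r then 1 else 0

/-- Coefficient `c_k` of the product `(x^n + Σ_{i<n} a_i x^i) (x^r + Σ_{j<r} b_j x^j)`. -/
noncomputable def cCoef (n r k : ℕ) : Amod (n + r) :=
  ∑ p ∈ Finset.HasAntidiagonal.antidiagonal k, aCoef n r p.1 * bCoef n r p.2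

/-- The ideal `I(μ_{n,r}) ⊆ 𝒜 (n+r)` of the polynomial multiplication map `μ_{n,r}`,
generated by `c_0, …, c_{n+r-1}`. -/
noncomputable def muIdeal (n r : ℕ) : Ideal (Amod (n + r)) :=
  Ideal.span (Set.range fun k : Fin (n + r) => cCoef n r (k : ℕ))

/-- The sequence `I(n,r)` given by the Euclidean algorithm on `n` and `r` (0-indexed):
`r` repeated `n / r` times, then `r₁ = n % r` repeated `r / r₁` times, …, followed by zeros. -/
def euclidSeq (n r p : ℕ) : ℕ :=
  if h : r = 0 then 0
  else if p < n / r then r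
  else euclidSeq r (n % r) (p - n / r)
termination_by r
decreasing_by exact Nat.mod_lt _ (Nat.pos_of_ne_zero h)

/-- The `ℂ`-algebra embedding `𝒜 m₁ → 𝒜 (m₁+m₂)` using the first `m₁` variables. -/
noncomputable def embL {m₁ m₂ : ℕ} (φ : Amod m₁) : Amod (m₁ + m₂) :=
  fun e =>
    if ∀ j : Fin m₂, e (Fin.natAdd m₁ j) = 0 then
      MvPowerSeries.coeff (Finsupp.equivFunOnFinite.symm fun i => e (Fin.castAdd m₂ i)) φ
    else 0

/-- The `ℂ`-algebra embedding `𝒜 m₂ → 𝒜 (m₁+m₂)` using the last `m₂` variables. -/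
noncomputable def embR {m₁ m₂ : ℕ} (φ : Amod m₂) : Amod (m₁ + m₂) :=
  fun e =>
    if ∀ i : Fin m₁, e (Fin.castAdd m₂ i) = 0 then
      MvPowerSeries.coeff (Finsupp.equivFunOnFinite.symm fun j => e (Fin.natAdd m₁ j)) φ
    else 0

/-- The product ideal `J₁ ⊞ J₂ ⊆ 𝒜 (m₁+m₂)`, generated by the images of `J₁` and `J₂`
under the two embeddings; it models the ideal of the Cartesian product of two map-germs. -/
noncomputable def prodIdeal {m₁ m₂ : ℕ} (J₁ : Ideal (Amod m₁)) (J₂ : Ideal (Amod m₂)) :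
    Ideal (Amod (m₁ + m₂)) :=
  Ideal.span (embL '' (J₁ : Set (Amod m₁)) ∪ embR '' (J₂ : Set (Amod m₂)))

/-!
The constant term of a Jacobian minor `det (∂φ_i/∂x_{j_l})` is the same minor of the matrix of
differentials at `0`, so the minor is a unit exactly when the differentials `dφ_i`, restricted to
the coordinates `j_l`, are linearly independent. For `k > rank B` the differentials of `k` elements
of `B` are dependent, so every `k × k` minor lies in the maximal ideal. For `k = rank B` choose
elements of `B` with independent differentials, then `k` coordinates on which they stay
independent: the resulting minor is a unit.
-/

open Matrix

section ColumnSelection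

variable {K : Type*} [Field K] {k m : ℕ}

theorem exists_strictMono_linearIndependent_comp {v : Fin m → Fin k → K}
    (hv : Submodule.span K (Set.range v) = ⊤) :
    ∃ j : Fin k → Fin m, StrictMono j ∧ LinearIndependent K (v ∘ j) := by
  classical
  obtain ⟨b, -, -, hb_span, hb_li⟩ :=
    exists_linearIndepOn_extension (linearIndepOn_empty K v) (Set.empty_subset Set.univ)
  have hb_top : Submodule.span K (v '' b) = ⊤ := by
    rw [eq_top_iff, ← hv, ← Set.image_univ]
    exact Submodule.span_le.mpr hb_span
  have hb_card : b.toFinset.card = k := by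
    have := linearIndependent_iff_card_eq_finrank_span.mp hb_li
    rw [Set.finrank, ← Set.image_eq_range, hb_top, finrank_top, Module.finrank_fin_fun] at this
    rwa [Set.toFinset_card]
  let j := b.toFinset.orderEmbOfFin hb_card
  have hj_mem : ∀ l, j l ∈ b := fun l => Set.mem_toFinset.mp (b.toFinset.orderEmbOfFin_mem _ l)
  refine ⟨j, j.strictMono, ?_⟩
  exact hb_li.comp (fun l => ⟨j l, hj_mem l⟩)
    (Function.Injective.of_comp (f := Subtype.val) j.injective)

theorem exists_strictMono_linearIndependent_restrict {v : Fin k → Fin m → K}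
    (hv : LinearIndependent K v) :
    ∃ j : Fin k → Fin m, StrictMono j ∧ LinearIndependent K fun i l => v i (j l) := by
  have hcols : Submodule.span K (Set.range (of v).col) = ⊤ := by
    refine Submodule.eq_top_of_finrank_eq ?_
    rw [← rank_eq_finrank_span_cols, LinearIndependent.rank_matrix (M := of v) hv,
      Fintype.card_fin, Module.finrank_fin_fun]
  obtain ⟨j, hj, hj_li⟩ := exists_strictMono_linearIndependent_comp hcols
  refine ⟨j, hj, ?_⟩
  have : IsUnit ((of v).submatrix id j) := linearIndependent_cols_iff_isUnit.mp hj_li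
  exact linearIndependent_rows_iff_isUnit.mpr this

end ColumnSelection

section JacobianMinor

variable {m k : ℕ}

lemma constantCoeff_pd (j : Fin m) (φ : Amod m) :
    constantCoeff (pd j φ) = diffAtZero φ j := by
  rw [← coeff_zero_eq_constantCoeff_apply, coeff_apply]
  simp [pd, diffAtZero]

lemma isUnit_det_pd_iff (φ : Fin k → Amod m) (j : Fin k → Fin m) :
    IsUnit (det (of fun i l => pd (j l) (φ i))) ↔
      LinearIndependent ℂ fun i l => diffAtZero (φ i) (j l) := by
  have hmap : constantCoeff.mapMatrix (of fun i l => pd (j l) (φ i)) =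
      of fun i l => diffAtZero (φ i) (j l) := by
    ext i l
    exact constantCoeff_pd (j l) (φ i)
  rw [isUnit_iff_constantCoeff, RingHom.map_det, hmap, ← isUnit_iff_isUnit_det,
    ← linearIndependent_rows_iff_isUnit]
  rfl

end JacobianMinor

section Rank

variable {m : ℕ}

noncomputable def diffAtZeroLinearMap (m : ℕ) : Amod m →ₗ[ℂ] Fin m → ℂ :=
  LinearMap.pi fun j => coeff (Finsupp.single j 1)

@[simp]
lemma coe_diffAtZeroLinearMap (m : ℕ) : ⇑(diffAtZeroLinearMap m) = diffAtZero := rfl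

lemma span_image_diffAtZero (B : Ideal (Amod m)) :
    Submodule.span ℂ (diffAtZero '' (B : Set (Amod m))) =
      (B.restrictScalars ℂ).map (diffAtZeroLinearMap m) := by
  rw [← Submodule.span_eq ((B.restrictScalars ℂ).map (diffAtZeroLinearMap m)), Submodule.map_coe]
  rfl

lemma rankIdeal_le (B : Ideal (Amod m)) : rankIdeal B ≤ m :=
  (Submodule.finrank_le _).trans_eq (Module.finrank_fin_fun ℂ)

lemma exists_linearIndependent_diffAtZero (B : Ideal (Amod m)) :
    ∃ φ : Fin (rankIdeal B) → Amod m, (∀ i, φ i ∈ B) ∧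
      LinearIndependent ℂ fun i => diffAtZero (φ i) := by
  obtain ⟨f, hf⟩ := exists_linearIndependent_of_le_finrank (le_refl (rankIdeal B))
  have hf_mem (i) : ∃ φ ∈ B, diffAtZero φ = f i := by
    simpa [span_image_diffAtZero] using (f i).2
  choose φ hφB hφf using hf_mem
  refine ⟨φ, hφB, ?_⟩
  simp_rw [hφf]
  exact hf.map' _ (Submodule.ker_subtype _)

lemma not_linearIndependent_diffAtZero_of_rankIdeal_lt {B : Ideal (Amod m)} {k : ℕ}
    (hk : rankIdeal B < k) {φ : Fin k → Amod m} (hφ : ∀ i, φ i ∈ B) :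
    ¬ LinearIndependent ℂ fun i => diffAtZero (φ i) := by
  intro hli
  have hcard := linearIndependent_iff_card_eq_finrank_span.mp hli
  have hle : Set.finrank ℂ (Set.range fun i => diffAtZero (φ i)) ≤ rankIdeal B := by
    refine Submodule.finrank_mono (Submodule.span_mono ?_)
    rintro _ ⟨i, rfl⟩
    exact ⟨φ i, hφ i, rfl⟩
  rw [Fintype.card_fin] at hcard
  omega

end Rank

section JacobianExtension

variable {m : ℕ}

theorem jacExt_le_maximalIdeal_of_rankIdeal_lt {B : Ideal (Amod m)} (hB : B ≠ ⊤) {k : ℕ}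
    (hk : rankIdeal B < k) : jacExt k B ≤ IsLocalRing.maximalIdeal (Amod m) := by
  have hB_le := IsLocalRing.le_maximalIdeal hB
  unfold jacExt
  split_ifs
  · exact hB_le
  refine sup_le hB_le (Ideal.span_le.mpr ?_)
  rintro _ ⟨φ, hφ, j, -, rfl⟩ hunit
  exact not_linearIndependent_diffAtZero_of_rankIdeal_lt hk hφ <|
    ((isUnit_det_pd_iff φ j).mp hunit).of_comp (LinearMap.funLeft ℂ ℂ j)

theorem jacExt_rankIdeal_eq_top (B : Ideal (Amod m)) : jacExt (rankIdeal B) B = ⊤ := by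
  obtain ⟨φ, hφB, hφ_li⟩ := exists_linearIndependent_diffAtZero B
  obtain ⟨j, hj, hj_li⟩ := exists_strictMono_linearIndependent_restrict hφ_li
  rw [jacExt, if_neg (rankIdeal_le B).not_gt]
  exact Ideal.eq_top_of_isUnit_mem _
    (Ideal.mem_sup_right (Ideal.subset_span ⟨φ, hφB, j, hj, rfl⟩))
    ((isUnit_det_pd_iff φ j).mpr hj_li)

end JacobianExtension

/-- **The critical Jacobian extension.** Let `B ⊆ 𝒜 m` be a proper ideal of corank `i`.
Then (a) `Δ^i B = Δ_{m-i+1} B` is a proper ideal, indeed contained in the maximal ideal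
of `𝒜 m`; and (b) if `i < m` then `Δ_{m-i} B = 𝒜 m`. Hence `Δ^i B` with `i = corank B` is
the critical Jacobian extension of `B`. -/
theorem jacExtUpper_corank_is_critical (m : ℕ) (B : Ideal (Amod m)) (hB : B ≠ ⊤) :
    jacExtUpper (corankIdeal B) B ≠ ⊤ ∧
    jacExtUpper (corankIdeal B) B ≤ IsLocalRing.maximalIdeal (Amod m) ∧
    (corankIdeal B < m → jacExt (m - corankIdeal B) B = ⊤) := by
  have hrank : m - corankIdeal B = rankIdeal B := by
    have := rankIdeal_le B
    unfold corankIdeal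
    omega
  have hmax := jacExt_le_maximalIdeal_of_rankIdeal_lt hB (Nat.lt_succ_self (rankIdeal B))
  rw [jacExtUpper, hrank]
  exact ⟨ne_top_of_le_ne_top (IsLocalRing.maximalIdeal.isMaximal _).ne_top hmax, hmax,
    fun _ => jacExt_rankIdeal_eq_top B⟩
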